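/- Let Θ ⊆ ℝ^q be compact with θ₀ ∈ Θ, let m : ℝ^q → ℝ^k be twice continuously differentiable on an open neighborhood of Θ with m(θ) = 0 for θ ∈ Θ if and only if θ = θ₀, and suppose the Jacobian M = Dm(θ₀) (a k×q matrix) has rank q. Let Σ : Θ → ℝ^{k×k} assign to each θ a symmetric matrix with all eigenvalues in [1/λ̄, λ̄] for some λ̄ ≥ 1. Fix 0 ≤ α < 1/2 and γ with (1/2)(1/2 − α) < γ < 1/2 − α, and set δ_T = T^{−γ}, m_T(θ) = T^{1/2−α} m(θ), M_T = T^{1/2−α} M. Then as T → ∞ along the positive integers: (i) inf_{θ∈Θ, ‖θ−θ₀‖>δ_T} m_T(θ)'Σ(θ)^{-1}m_T(θ) → ∞; (ii) sup_{θ∈Θ, ‖θ−θ₀‖≤δ_T} ‖m_T(θ) − M_T(θ−θ₀)‖ → 0; and (iii) δ_T² · λ_min(M_T'Σ(θ₀)^{-1}M_T) → ∞. -/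

import Mathlib

open Matrix Filter

/-- Euclidean norm of a vector in `ℝ^k`. -/
noncomputable def euclNorm {k : ℕ} (x : Fin k → ℝ) : ℝ :=
  Real.sqrt (∑ i, x i ^ 2)

/-- Minimal eigenvalue of a symmetric matrix, via the Rayleigh quotient:
`λ_min(A) = inf {x'Ax : ‖x‖ = 1}`. -/
noncomputable def minEig {q : ℕ} (A : Matrix (Fin q) (Fin q) ℝ) : ℝ :=
  sInf {r : ℝ | ∃ x : Fin q → ℝ, euclNorm x = 1 ∧ r = x ⬝ᵥ A.mulVec x}

/-!
A second-order Taylor expansion gives `‖m θ - M (θ - θ₀)‖ = O(‖θ - θ₀‖²)` and full rank gives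
`‖M v‖ ≥ σ ‖v‖`; with the unique zero and compactness of `Θ` this yields
`‖m θ‖ ≥ c · min ‖θ - θ₀‖ ε` on `Θ`. Since `Σ(θ)⁻¹ ≥ λ̄⁻¹` in the Loewner order, the criterion in
(i) and `δ_T² λ_min` in (iii) are both bounded below by a multiple of
`(T^{1/2-α} δ_T)² = T^{1-2α-2γ} → ∞`, while the linearisation error in (ii) is
`O(T^{1/2-α} δ_T²) = O(T^{1/2-α-2γ}) → 0`.
-/

open Topology Asymptotics

section EuclNorm

variable {n : ℕ}

lemma euclNorm_eq_norm_toLp (x : Fin n → ℝ) : euclNorm x = ‖WithLp.toLp 2 x‖ := by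
  simp [euclNorm, EuclideanSpace.norm_eq]

lemma euclNorm_nonneg (x : Fin n → ℝ) : 0 ≤ euclNorm x := Real.sqrt_nonneg _

@[simp]
lemma euclNorm_zero : euclNorm (0 : Fin n → ℝ) = 0 := by
  simp [euclNorm]

lemma euclNorm_sq (x : Fin n → ℝ) : euclNorm x ^ 2 = x ⬝ᵥ x := by
  rw [euclNorm, Real.sq_sqrt (by positivity)]
  simp [dotProduct, sq]

lemma euclNorm_smul (c : ℝ) (x : Fin n → ℝ) : euclNorm (c • x) = |c| * euclNorm x := by
  simp [euclNorm_eq_norm_toLp, norm_smul]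

lemma euclNorm_pos {x : Fin n → ℝ} (hx : x ≠ 0) : 0 < euclNorm x := by
  simpa [euclNorm_eq_norm_toLp] using hx

lemma norm_le_euclNorm (x : Fin n → ℝ) : ‖x‖ ≤ euclNorm x := by
  rw [euclNorm_eq_norm_toLp]
  exact pi_norm_le_iff_of_nonneg (norm_nonneg _) |>.mpr
    fun i => PiLp.norm_apply_le (WithLp.toLp 2 x) i

lemma dist_le_euclNorm_sub (x y : Fin n → ℝ) : dist x y ≤ euclNorm (x - y) :=
  (dist_eq_norm x y).trans_le (norm_le_euclNorm _)

lemma euclNorm_le_euclNorm_add_euclNorm_sub (x y : Fin n → ℝ) :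
    euclNorm y ≤ euclNorm x + euclNorm (x - y) := by
  simpa [euclNorm_eq_norm_toLp] using norm_le_norm_add_norm_sub (WithLp.toLp 2 x) (WithLp.toLp 2 y)

@[fun_prop]
lemma continuous_euclNorm : Continuous (euclNorm (k := n)) := by
  unfold euclNorm
  fun_prop

end EuclNorm

open scoped MatrixOrder in
lemma inv_mul_dotProduct_le_dotProduct_inv_mulVec {n : Type*} [Fintype n] [DecidableEq n]
    {S : Matrix n n ℝ} (hS : S.IsHermitian) {lam : ℝ}
    (hpos : ∀ i, 0 < hS.eigenvalues i) (hle : ∀ i, hS.eigenvalues i ≤ lam) (y : n → ℝ) :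
    lam⁻¹ * (y ⬝ᵥ y) ≤ y ⬝ᵥ S⁻¹ *ᵥ y := by
  have hspec : ∀ x ∈ spectrum ℝ S, 0 < x ∧ x ≤ lam := by
    rw [hS.spectrum_real_eq_range_eigenvalues]
    rintro _ ⟨i, rfl⟩
    exact ⟨hpos i, hle i⟩
  have hunit : IsUnit S := (spectrum.zero_notMem_iff ℝ).mp fun h => (hspec 0 h).1.false
  -- `S⁻¹ = cfc (·⁻¹) S`, so the Loewner bound is read off the spectrum of `S`.
  have hinv : algebraMap ℝ _ lam⁻¹ ≤ S⁻¹ := by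
    rw [nonsing_inv_eq_ringInverse, ← cfc_ringInverse_id (R := ℝ) S hunit hS.isSelfAdjoint,
      algebraMap_le_cfc_iff _ _ _ ?_ hS.isSelfAdjoint]
    · exact fun x hx => inv_anti₀ (hspec x hx).1 (hspec x hx).2
    · exact continuousOn_inv₀.mono fun x hx => (hspec x hx).1.ne'
  have := (Matrix.le_iff.mp hinv).dotProduct_mulVec_nonneg y
  simpa [sub_mulVec, Algebra.algebraMap_eq_smul_one, smul_mulVec, dotProduct_sub] using this

lemma inv_mul_euclNorm_sq_le {k : ℕ} {S : Matrix (Fin k) (Fin k) ℝ} {lam : ℝ} (hlam : 0 < lam)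
    (hS : ∃ hH : S.IsHermitian, ∀ i, hH.eigenvalues i ∈ Set.Icc (1 / lam) lam) (y : Fin k → ℝ) :
    lam⁻¹ * euclNorm y ^ 2 ≤ y ⬝ᵥ S⁻¹ *ᵥ y := by
  obtain ⟨hH, hev⟩ := hS
  rw [euclNorm_sq]
  exact inv_mul_dotProduct_le_dotProduct_inv_mulVec hH
    (fun i => (one_div_pos.mpr hlam).trans_le (hev i).1) (fun i => (hev i).2) y

lemma exists_pos_mul_euclNorm_le_euclNorm_mulVec {k q : ℕ} {M : Matrix (Fin k) (Fin q) ℝ}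
    (hM : M.rank = q) : ∃ σ > 0, ∀ v, σ * euclNorm v ≤ euclNorm (M *ᵥ v) := by
  have hinj : Function.Injective M.mulVec :=
    Matrix.mulVec_injective_iff.mpr <| linearIndependent_iff_card_eq_finrank_span.mpr <| by
      rw [Set.finrank, ← rank_eq_finrank_span_cols, hM, Fintype.card_fin]
  have hker : LinearMap.ker (Matrix.toLpLin 2 2 M) = ⊥ :=
    LinearMap.ker_eq_bot.mpr fun x y h => by
      simpa using congrArg (WithLp.toLp 2) (hinj (congrArg WithLp.ofLp h))
  obtain ⟨K, hK, hanti⟩ := LinearMap.exists_antilipschitzWith _ hker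
  have hK' : (0 : ℝ) < K := hK
  refine ⟨(K : ℝ)⁻¹, inv_pos.mpr hK', fun v => ?_⟩
  have := hanti.le_mul_dist (WithLp.toLp 2 v) 0
  simp only [dist_zero_right, map_zero, Matrix.toLpLin_toLp, Matrix.toLin'_apply] at this
  rw [euclNorm_eq_norm_toLp, euclNorm_eq_norm_toLp, inv_mul_le_iff₀ hK']
  exact this

theorem ContDiffAt.isBigO_sub_sub_fderiv {E F : Type*} [NormedAddCommGroup E] [NormedSpace ℝ E]
    [NormedAddCommGroup F] [NormedSpace ℝ F] {f : E → F} {x : E} (hf : ContDiffAt ℝ 2 f x) :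
    (fun y => f y - f x - fderiv ℝ f x (y - x)) =O[𝓝 x] fun y => ‖y - x‖ ^ 2 := by
  obtain ⟨K, t, ht, hlip⟩ := (hf.fderiv_right (m := 1) (by norm_num)).exists_lipschitzOnWith
  have hdiff : ∀ᶠ y in 𝓝 x, DifferentiableAt ℝ f y :=
    (hf.eventually (by simp)).mono fun y hy => hy.differentiableAt (by norm_num)
  obtain ⟨ε, hε, hball⟩ := Metric.mem_nhds_iff.mp (inter_mem ht hdiff)
  refine IsBigO.of_bound K (eventually_of_mem (Metric.ball_mem_nhds x hε) fun y hy => ?_)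
  have hsub : Metric.closedBall x ‖y - x‖ ⊆ Metric.ball x ε :=
    Metric.closedBall_subset_ball (mem_ball_iff_norm.mp hy)
  have hx : x ∈ t := (hball (Metric.mem_ball_self hε)).1
  have hbound : ∀ z ∈ Metric.closedBall x ‖y - x‖, ‖fderiv ℝ f z - fderiv ℝ f x‖ ≤ K * ‖y - x‖ :=
    fun z hz => (hlip.norm_sub_le (hball (hsub hz)).1 hx).trans <| by
      gcongr
      exact mem_closedBall_iff_norm.mp hz
  calc ‖f y - f x - fderiv ℝ f x (y - x)‖ ≤ K * ‖y - x‖ * ‖y - x‖ :=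
        (convex_closedBall x _).norm_image_sub_le_of_norm_fderiv_le'
          (fun z hz => (hball (hsub hz)).2) hbound (Metric.mem_closedBall_self (norm_nonneg _))
          (mem_closedBall_iff_norm.2 le_rfl)
    _ = K * ‖‖y - x‖ ^ 2‖ := by rw [norm_pow, norm_norm, mul_assoc, sq]

lemma isBigO_euclNorm_sub_mulVec {q k : ℕ} {m : (Fin q → ℝ) → Fin k → ℝ} {θ₀ : Fin q → ℝ}
    {M : Matrix (Fin k) (Fin q) ℝ} (hm : ContDiffAt ℝ 2 m θ₀) (hm0 : m θ₀ = 0)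
    (hM : M = LinearMap.toMatrix' (fderiv ℝ m θ₀ : (Fin q → ℝ) →ₗ[ℝ] (Fin k → ℝ))) :
    (fun θ => euclNorm (m θ - M *ᵥ (θ - θ₀))) =O[𝓝 θ₀] fun θ => euclNorm (θ - θ₀) ^ 2 := by
  subst hM
  have hlin : (fun θ => euclNorm (m θ - LinearMap.toMatrix' (fderiv ℝ m θ₀ :
      (Fin q → ℝ) →ₗ[ℝ] (Fin k → ℝ)) *ᵥ (θ - θ₀))) =O[𝓝 θ₀]
      fun θ => m θ - m θ₀ - fderiv ℝ m θ₀ (θ - θ₀) := by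
    simpa [euclNorm_eq_norm_toLp, hm0] using
      ((EuclideanSpace.equiv (Fin k) ℝ).symm.toContinuousLinearMap.isBigO_comp
        (fun θ => m θ - m θ₀ - fderiv ℝ m θ₀ (θ - θ₀)) (𝓝 θ₀)).norm_left
  refine hlin.trans (hm.isBigO_sub_sub_fderiv.trans (IsBigO.of_bound 1 (Eventually.of_forall
    fun θ => ?_)))
  simp only [norm_pow, Real.norm_eq_abs, abs_norm, abs_of_nonneg (euclNorm_nonneg _), one_mul]
  gcongr
  exact norm_le_euclNorm _

section Identification

variable {q k : ℕ} {m : (Fin q → ℝ) → Fin k → ℝ} {θ₀ : Fin q → ℝ}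

lemma eventually_mul_euclNorm_le_euclNorm {M : Matrix (Fin k) (Fin q) ℝ} {σ : ℝ} (hσ : 0 < σ)
    (hM : ∀ v, σ * euclNorm v ≤ euclNorm (M *ᵥ v))
    (hm : (fun θ => euclNorm (m θ - M *ᵥ (θ - θ₀))) =O[𝓝 θ₀] fun θ => euclNorm (θ - θ₀) ^ 2) :
    ∀ᶠ θ in 𝓝 θ₀, σ / 2 * euclNorm (θ - θ₀) ≤ euclNorm (m θ) := by
  have hdist : Tendsto (fun θ => euclNorm (θ - θ₀)) (𝓝 θ₀) (𝓝 0) := by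
    simpa [Function.comp_def] using
      (continuous_euclNorm.comp (continuous_sub_right θ₀)).tendsto θ₀
  have hsmall := (hm.trans_isLittleO ((isLittleO_pow_id one_lt_two).comp_tendsto hdist)).def
    (half_pos hσ)
  filter_upwards [hsmall] with θ hθ
  simp only [Function.comp_apply, Real.norm_eq_abs, abs_of_nonneg (euclNorm_nonneg _)] at hθ
  linarith [hM (θ - θ₀), euclNorm_le_euclNorm_add_euclNorm_sub (m θ) (M *ᵥ (θ - θ₀))]

lemma exists_pos_mul_min_le_euclNorm {Θ : Set (Fin q → ℝ)} (hΘ : IsCompact Θ)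
    (hm : ContinuousOn m Θ) (hzero : ∀ θ ∈ Θ, m θ = 0 → θ = θ₀) {c : ℝ} (hc : 0 < c)
    (hloc : ∀ᶠ θ in 𝓝 θ₀, c * euclNorm (θ - θ₀) ≤ euclNorm (m θ)) :
    ∃ c' > 0, ∃ ε > 0, ∀ θ ∈ Θ, c' * min (euclNorm (θ - θ₀)) ε ≤ euclNorm (m θ) := by
  obtain ⟨ε, hε, hnear⟩ := Metric.eventually_nhds_iff.mp hloc
  have hfar : IsCompact (Θ ∩ {θ | ε ≤ euclNorm (θ - θ₀)}) :=
    hΘ.inter_right (isClosed_le continuous_const (by fun_prop))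
  obtain ⟨b, hb, hbfar⟩ := hfar.exists_forall_le' (a := 0)
    (continuous_euclNorm.comp_continuousOn (hm.mono Set.inter_subset_left))
    fun θ ⟨hθ, hθε⟩ => euclNorm_pos fun h => by
      rw [Set.mem_ofPred_eq, hzero θ hθ h, sub_self, euclNorm_zero] at hθε
      linarith
  refine ⟨min c (b / ε), lt_min hc (div_pos hb hε), ε, hε, fun θ hθ => ?_⟩
  rcases lt_or_ge (euclNorm (θ - θ₀)) ε with hlt | hge
  · rw [min_eq_left hlt.le]
    calc min c (b / ε) * euclNorm (θ - θ₀) ≤ c * euclNorm (θ - θ₀) := by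
          gcongr
          · exact euclNorm_nonneg _
          · exact min_le_left _ _
      _ ≤ euclNorm (m θ) := hnear ((dist_le_euclNorm_sub θ θ₀).trans_lt hlt)
  · rw [min_eq_right hge]
    calc min c (b / ε) * ε ≤ b / ε * ε := by gcongr; exact min_le_right _ _
      _ = b := div_mul_cancel₀ b hε.ne'
      _ ≤ euclNorm (m θ) := hbfar θ ⟨hθ, hge⟩

end Identification

section Rates

lemma eventually_natCast_rpow_mul_rpow (a b : ℝ) :
    ∀ᶠ T : ℕ in atTop, (T : ℝ) ^ (a + b) = (T : ℝ) ^ a * (T : ℝ) ^ b := by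
  filter_upwards [eventually_gt_atTop 0] with T hT
  exact Real.rpow_add (Nat.cast_pos.mpr hT) a b

lemma tendsto_natCast_rpow_atTop {e : ℝ} (he : 0 < e) :
    Tendsto (fun T : ℕ => (T : ℝ) ^ e) atTop atTop :=
  (tendsto_rpow_atTop he).comp tendsto_natCast_atTop_atTop

lemma tendsto_natCast_rpow_nhds_zero {e : ℝ} (he : e < 0) :
    Tendsto (fun T : ℕ => (T : ℝ) ^ e) atTop (𝓝 0) := by
  simpa [Function.comp_def] using
    (tendsto_rpow_neg_atTop (neg_pos.mpr he)).comp tendsto_natCast_atTop_atTop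

end Rates

section Verification

variable {q k : ℕ} {θ₀ : Fin q → ℝ} {lam a γ : ℝ}

lemma exists_forall_le_dotProduct_inv_mulVec {Θ : Set (Fin q → ℝ)} {m : (Fin q → ℝ) → Fin k → ℝ}
    {S : (Fin q → ℝ) → Matrix (Fin k) (Fin k) ℝ} (hlam : 0 < lam)
    (hS : ∀ θ ∈ Θ, ∃ hH : (S θ).IsHermitian, ∀ i, hH.eigenvalues i ∈ Set.Icc (1 / lam) lam)
    {c ε : ℝ} (hc : 0 < c) (hε : 0 < ε)
    (hsep : ∀ θ ∈ Θ, c * min (euclNorm (θ - θ₀)) ε ≤ euclNorm (m θ)) (hγ : 0 < γ) (hγa : γ < a)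
    (B : ℝ) : ∃ T₀ : ℕ, ∀ T : ℕ, T₀ ≤ T → ∀ θ ∈ Θ, (T : ℝ) ^ (-γ) < euclNorm (θ - θ₀) →
      B ≤ ((T : ℝ) ^ a • m θ) ⬝ᵥ (S θ)⁻¹ *ᵥ ((T : ℝ) ^ a • m θ) := by
  have hgrowth : Tendsto (fun T : ℕ => lam⁻¹ * (c * ((T : ℝ) ^ a * (T : ℝ) ^ (-γ))) ^ 2)
      atTop atTop :=
    ((tendsto_pow_atTop two_ne_zero).comp <| ((tendsto_natCast_rpow_atTop
      (by linarith : 0 < a + -γ)).congr' (eventually_natCast_rpow_mul_rpow a (-γ))).const_mul_atTop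
        hc).const_mul_atTop (inv_pos.mpr hlam)
  obtain ⟨T₀, hT₀⟩ := eventually_atTop.mp <| (hgrowth.eventually_ge_atTop B).and <|
    (tendsto_natCast_rpow_nhds_zero (neg_lt_zero.mpr hγ)).eventually (eventually_le_nhds hε)
  refine ⟨T₀, fun T hT θ hθ hfar => ?_⟩
  obtain ⟨hB, hδε⟩ := hT₀ T hT
  have hs : 0 ≤ (T : ℝ) ^ a := Real.rpow_nonneg T.cast_nonneg a
  calc B ≤ lam⁻¹ * (c * ((T : ℝ) ^ a * (T : ℝ) ^ (-γ))) ^ 2 := hB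
    _ ≤ lam⁻¹ * euclNorm ((T : ℝ) ^ a • m θ) ^ 2 := by
        rw [euclNorm_smul, abs_of_nonneg hs, mul_left_comm]
        gcongr
        calc c * (T : ℝ) ^ (-γ) ≤ c * min (euclNorm (θ - θ₀)) ε := by
              gcongr; exact le_min hfar.le hδε
          _ ≤ euclNorm (m θ) := hsep θ hθ
    _ ≤ _ := inv_mul_euclNorm_sq_le hlam (hS θ hθ) _

lemma exists_forall_euclNorm_rpow_smul_sub_le {m : (Fin q → ℝ) → Fin k → ℝ}
    {M : Matrix (Fin k) (Fin q) ℝ}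
    (hm : (fun θ => euclNorm (m θ - M *ᵥ (θ - θ₀))) =O[𝓝 θ₀] fun θ => euclNorm (θ - θ₀) ^ 2)
    (hγ : 0 < γ) (haγ : a < 2 * γ) {ε : ℝ} (hε : 0 < ε) :
    ∃ T₀ : ℕ, ∀ T : ℕ, T₀ ≤ T → ∀ θ, euclNorm (θ - θ₀) ≤ (T : ℝ) ^ (-γ) →
      euclNorm ((T : ℝ) ^ a • m θ - ((T : ℝ) ^ a • M) *ᵥ (θ - θ₀)) ≤ ε := by
  obtain ⟨C, hC, hCbound⟩ := hm.exists_pos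
  obtain ⟨r, hr, hnear⟩ := Metric.eventually_nhds_iff.mp hCbound.bound
  have hdecay : Tendsto (fun T : ℕ => C * ((T : ℝ) ^ a * (T : ℝ) ^ (-γ) * (T : ℝ) ^ (-γ)))
      atTop (𝓝 0) := by
    have := ((tendsto_natCast_rpow_nhds_zero (by linarith : a + -γ + -γ < 0)).congr'
      (((eventually_natCast_rpow_mul_rpow (a + -γ) (-γ)).and
        (eventually_natCast_rpow_mul_rpow a (-γ))).mono fun T h => by rw [h.1, h.2])).const_mul C
    simpa using this
  obtain ⟨T₀, hT₀⟩ := eventually_atTop.mp <| (hdecay.eventually (eventually_le_nhds hε)).and <|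
    (tendsto_natCast_rpow_nhds_zero (neg_lt_zero.mpr hγ)).eventually (eventually_lt_nhds hr)
  refine ⟨T₀, fun T hT θ hclose => ?_⟩
  obtain ⟨hCε, hδr⟩ := hT₀ T hT
  have hs : 0 ≤ (T : ℝ) ^ a := Real.rpow_nonneg T.cast_nonneg a
  have hθ := hnear ((dist_le_euclNorm_sub θ θ₀).trans_lt (hclose.trans_lt hδr))
  simp only [Real.norm_eq_abs, abs_of_nonneg (euclNorm_nonneg _), abs_pow] at hθ
  calc euclNorm ((T : ℝ) ^ a • m θ - ((T : ℝ) ^ a • M) *ᵥ (θ - θ₀))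
      = (T : ℝ) ^ a * euclNorm (m θ - M *ᵥ (θ - θ₀)) := by
        rw [smul_mulVec, ← smul_sub, euclNorm_smul, abs_of_nonneg hs]
    _ ≤ (T : ℝ) ^ a * (C * euclNorm (θ - θ₀) ^ 2) := by gcongr
    _ ≤ (T : ℝ) ^ a * (C * ((T : ℝ) ^ (-γ)) ^ 2) := by
        gcongr
        exact euclNorm_nonneg _
    _ = C * ((T : ℝ) ^ a * (T : ℝ) ^ (-γ) * (T : ℝ) ^ (-γ)) := by ring
    _ ≤ ε := hCε

lemma dotProduct_transpose_mul_mul_mulVec {n p : Type*} [Fintype n] [Fintype p]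
    (N : Matrix n p ℝ) (A : Matrix n n ℝ) (x : p → ℝ) :
    x ⬝ᵥ (Nᵀ * A * N) *ᵥ x = (N *ᵥ x) ⬝ᵥ A *ᵥ (N *ᵥ x) := by
  rw [← mulVec_mulVec, ← mulVec_mulVec, dotProduct_mulVec, vecMul_transpose, dotProduct_comm]

lemma le_minEig (hq : 0 < q) {A : Matrix (Fin q) (Fin q) ℝ} {r : ℝ}
    (h : ∀ x, euclNorm x = 1 → r ≤ x ⬝ᵥ A *ᵥ x) : r ≤ minEig A := by
  refine le_csInf ⟨_, Pi.single ⟨0, hq⟩ 1, ?_, rfl⟩ fun _ ⟨x, hx, hr⟩ => hr ▸ h x hx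
  exact (euclNorm_eq_norm_toLp _).trans ((PiLp.norm_single 2 (fun _ => ℝ) _ 1).trans norm_one)

lemma tendsto_rpow_sq_mul_minEig_atTop (hq : 0 < q) {M : Matrix (Fin k) (Fin q) ℝ}
    {S : Matrix (Fin k) (Fin k) ℝ} (hlam : 0 < lam)
    (hS : ∃ hH : S.IsHermitian, ∀ i, hH.eigenvalues i ∈ Set.Icc (1 / lam) lam)
    {σ : ℝ} (hσ : 0 < σ) (hM : ∀ v, σ * euclNorm v ≤ euclNorm (M *ᵥ v)) (hγa : γ < a) :
    Tendsto (fun T : ℕ => ((T : ℝ) ^ (-γ)) ^ 2 *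
      minEig (((T : ℝ) ^ a • M)ᵀ * S⁻¹ * ((T : ℝ) ^ a • M))) atTop atTop := by
  have hgrowth : Tendsto (fun T : ℕ => lam⁻¹ * σ ^ 2 * ((T : ℝ) ^ a * (T : ℝ) ^ (-γ)) ^ 2)
      atTop atTop :=
    ((tendsto_pow_atTop two_ne_zero).comp <| (tendsto_natCast_rpow_atTop
      (by linarith : 0 < a + -γ)).congr' (eventually_natCast_rpow_mul_rpow a (-γ))).const_mul_atTop
        (by positivity)
  refine tendsto_atTop_mono (fun T => ?_) hgrowth
  have hs : 0 ≤ (T : ℝ) ^ a := Real.rpow_nonneg T.cast_nonneg a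
  have hmin : lam⁻¹ * σ ^ 2 * ((T : ℝ) ^ a) ^ 2 ≤
      minEig (((T : ℝ) ^ a • M)ᵀ * S⁻¹ * ((T : ℝ) ^ a • M)) := by
    refine le_minEig hq fun x hx => ?_
    rw [dotProduct_transpose_mul_mul_mulVec]
    refine le_trans ?_ (inv_mul_euclNorm_sq_le hlam hS _)
    rw [smul_mulVec, euclNorm_smul, abs_of_nonneg hs, mul_assoc, mul_pow, mul_comm (σ ^ 2)]
    gcongr
    simpa [hx] using hM x
  calc lam⁻¹ * σ ^ 2 * ((T : ℝ) ^ a * (T : ℝ) ^ (-γ)) ^ 2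
      = ((T : ℝ) ^ (-γ)) ^ 2 * (lam⁻¹ * σ ^ 2 * ((T : ℝ) ^ a) ^ 2) := by ring
    _ ≤ _ := by gcongr

end Verification

theorem stmt_11_general {q k : ℕ} (hq : 1 ≤ q)
    (Θ : Set (Fin q → ℝ)) (hΘ : IsCompact Θ) (θ₀ : Fin q → ℝ) (hθ₀ : θ₀ ∈ Θ)
    (m : (Fin q → ℝ) → (Fin k → ℝ))
    (V : Set (Fin q → ℝ)) (hV : IsOpen V) (hΘV : Θ ⊆ V)
    (hsm : ContDiffOn ℝ 2 m V)
    (hzero : ∀ θ ∈ Θ, (m θ = 0 ↔ θ = θ₀))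
    (M : Matrix (Fin k) (Fin q) ℝ)
    (hM : M = LinearMap.toMatrix'
      ((fderiv ℝ m θ₀ : (Fin q → ℝ) →L[ℝ] (Fin k → ℝ)) : (Fin q → ℝ) →ₗ[ℝ] (Fin k → ℝ)))
    (hrank : M.rank = q)
    (S : (Fin q → ℝ) → Matrix (Fin k) (Fin k) ℝ) (lam : ℝ) (hlam : 1 ≤ lam)
    (hSH : ∀ θ ∈ Θ, ∃ hH : (S θ).IsHermitian,
      ∀ i, hH.eigenvalues i ∈ Set.Icc (1 / lam) lam)
    (α γ : ℝ)
    (hγ1 : (1 / 2) * (1 / 2 - α) < γ) (hγ2 : γ < 1 / 2 - α) :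
    -- (i)
    (∀ B : ℝ, ∃ T₀ : ℕ, ∀ T : ℕ, T₀ ≤ T → ∀ θ ∈ Θ, (T : ℝ) ^ (-γ) < euclNorm (θ - θ₀) →
      B ≤ ((T : ℝ) ^ ((1 : ℝ) / 2 - α) • m θ) ⬝ᵥ
            (S θ)⁻¹.mulVec ((T : ℝ) ^ ((1 : ℝ) / 2 - α) • m θ)) ∧
    -- (ii)
    (∀ ε : ℝ, 0 < ε → ∃ T₀ : ℕ, ∀ T : ℕ, T₀ ≤ T → ∀ θ ∈ Θ,
      euclNorm (θ - θ₀) ≤ (T : ℝ) ^ (-γ) →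
      euclNorm ((T : ℝ) ^ ((1 : ℝ) / 2 - α) • m θ -
        ((T : ℝ) ^ ((1 : ℝ) / 2 - α) • M).mulVec (θ - θ₀)) ≤ ε) ∧
    -- (iii)
    Tendsto (fun T : ℕ => ((T : ℝ) ^ (-γ)) ^ 2 *
        minEig (((T : ℝ) ^ ((1 : ℝ) / 2 - α) • M)ᵀ * (S θ₀)⁻¹ *
          ((T : ℝ) ^ ((1 : ℝ) / 2 - α) • M)))
      atTop atTop := by
  have hlam0 : 0 < lam := one_pos.trans_le hlam
  have hγ : 0 < γ := by linarith
  have hm0 : m θ₀ = 0 := (hzero θ₀ hθ₀).mpr rfl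
  have htaylor := isBigO_euclNorm_sub_mulVec (hsm.contDiffAt (hV.mem_nhds (hΘV hθ₀))) hm0 hM
  obtain ⟨σ, hσ, hMσ⟩ := exists_pos_mul_euclNorm_le_euclNorm_mulVec hrank
  obtain ⟨c, hc, ε, hε, hsep⟩ := exists_pos_mul_min_le_euclNorm hΘ (hsm.continuousOn.mono hΘV)
    (fun θ hθ => (hzero θ hθ).mp) (half_pos hσ) (eventually_mul_euclNorm_le_euclNorm hσ hMσ htaylor)
  refine ⟨exists_forall_le_dotProduct_inv_mulVec hlam0 hSH hc hε hsep hγ hγ2, fun ε' hε' => ?_,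
    tendsto_rpow_sq_mul_minEig_atTop hq hlam0 (hSH θ₀ hθ₀) hσ hMσ hγ2⟩
  obtain ⟨T₀, hT₀⟩ :=
    exists_forall_euclNorm_rpow_smul_sub_le (a := 1 / 2 - α) htaylor hγ (by linarith) hε'
  exact ⟨T₀, fun T hT θ _ => hT₀ T hT θ⟩

/-- **Verification of the strong-identification Assumption 5 (i)–(iii) for smooth GMM
(Section 4.2).**  For `m` twice continuously differentiable on a neighborhood of the compact
`Θ`, vanishing on `Θ` exactly at `θ₀`, with full-rank Jacobian `M` at `θ₀`; covariances
`Σ(θ)` symmetric with eigenvalues in `[1/λ̄,λ̄]` on `Θ`; `m_T = T^{1/2−α} m`,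
`M_T = T^{1/2−α} M`, `δ_T = T^{−γ}`, and `(1/2)(1/2−α) < γ < 1/2−α`:
(i) `inf_{θ∈Θ, ‖θ−θ₀‖>δ_T} m_T(θ)'Σ(θ)⁻¹m_T(θ) → ∞`;
(ii) `sup_{θ∈Θ, ‖θ−θ₀‖≤δ_T} ‖m_T(θ) − M_T(θ−θ₀)‖ → 0`;
(iii) `δ_T² λ_min(M_T'Σ(θ₀)⁻¹M_T) → ∞`. -/
theorem stmt_11 {q k : ℕ} (hq : 1 ≤ q) (hk : 1 ≤ k)
    (Θ : Set (Fin q → ℝ)) (hΘ : IsCompact Θ) (θ₀ : Fin q → ℝ) (hθ₀ : θ₀ ∈ Θ)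
    (m : (Fin q → ℝ) → (Fin k → ℝ))
    (V : Set (Fin q → ℝ)) (hV : IsOpen V) (hΘV : Θ ⊆ V)
    (hsm : ContDiffOn ℝ 2 m V)
    (hzero : ∀ θ ∈ Θ, (m θ = 0 ↔ θ = θ₀))
    (M : Matrix (Fin k) (Fin q) ℝ)
    (hM : M = LinearMap.toMatrix'
      ((fderiv ℝ m θ₀ : (Fin q → ℝ) →L[ℝ] (Fin k → ℝ)) : (Fin q → ℝ) →ₗ[ℝ] (Fin k → ℝ)))
    (hrank : M.rank = q)
    (S : (Fin q → ℝ) → Matrix (Fin k) (Fin k) ℝ) (lam : ℝ) (hlam : 1 ≤ lam)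
    (hSH : ∀ θ ∈ Θ, ∃ hH : (S θ).IsHermitian,
      ∀ i, hH.eigenvalues i ∈ Set.Icc (1 / lam) lam)
    (α γ : ℝ) (hα0 : 0 ≤ α) (hα : α < 1 / 2)
    (hγ1 : (1 / 2) * (1 / 2 - α) < γ) (hγ2 : γ < 1 / 2 - α) :
    -- (i)
    (∀ B : ℝ, ∃ T₀ : ℕ, ∀ T : ℕ, T₀ ≤ T → ∀ θ ∈ Θ, (T : ℝ) ^ (-γ) < euclNorm (θ - θ₀) →
      B ≤ ((T : ℝ) ^ ((1 : ℝ) / 2 - α) • m θ) ⬝ᵥ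
            (S θ)⁻¹.mulVec ((T : ℝ) ^ ((1 : ℝ) / 2 - α) • m θ)) ∧
    -- (ii)
    (∀ ε : ℝ, 0 < ε → ∃ T₀ : ℕ, ∀ T : ℕ, T₀ ≤ T → ∀ θ ∈ Θ,
      euclNorm (θ - θ₀) ≤ (T : ℝ) ^ (-γ) →
      euclNorm ((T : ℝ) ^ ((1 : ℝ) / 2 - α) • m θ -
        ((T : ℝ) ^ ((1 : ℝ) / 2 - α) • M).mulVec (θ - θ₀)) ≤ ε) ∧
    -- (iii)
    Tendsto (fun T : ℕ => ((T : ℝ) ^ (-γ)) ^ 2 *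
        minEig (((T : ℝ) ^ ((1 : ℝ) / 2 - α) • M)ᵀ * (S θ₀)⁻¹ *
          ((T : ℝ) ^ ((1 : ℝ) / 2 - α) • M)))
      atTop atTop :=
  stmt_11_general hq Θ hΘ θ₀ hθ₀ m V hV hΘV hsm hzero M hM hrank S lam hlam hSH α γ hγ1 hγ2
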